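/- arXiv:1910.14032 — 2 statements merged into one kernel-verified Lean document; each statement's English description precedes it below -/
import Mathlib

section
/- If an ensemble of pure states {ρ_j, p_j} forms a 2-design, i.e., Σ_j p_j ρ_j ⊗ ρ_j* = (d|Φ⟩⟨Φ| + 1)/(d(d+1)), then the preparation operator Θ_P = d Σ_j p_j ρ_j ⊗ ρ_j* equals (d|Φ⟩⟨Φ| + 1)/(d+1), and for this Θ_P the maximal passing probability satisfies p_E(Θ_P, ε) = 1 − dε/(d+1) for 0 ≤ ε ≤ 1 − 1/d². -/
open scoped Matrix Kronecker ComplexOrder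

/-- Partial trace over the first tensor factor. -/
noncomputable def ptrace1 {d : ℕ} (M : Matrix (Fin d × Fin d) (Fin d × Fin d) ℂ) :
    Matrix (Fin d) (Fin d) ℂ :=
  fun j l => ∑ a, M (a, j) (a, l)

/-- The maximally entangled vector `Φ = (1/√d) ∑ⱼ |jj⟩`. -/
noncomputable def maxEnt (d : ℕ) : Fin d × Fin d → ℂ :=
  fun p => if p.1 = p.2 then (1 / Real.sqrt d : ℝ) else 0

/-- The maximal passing probability
`p_E(Θ, ε) := max { tr(Θ χ) : χ ≥ 0, tr₁ χ = 1/d, ⟨Φ|χ|Φ⟩ ≤ 1 − ε }`,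
where `χ` ranges over Choi states. -/
noncomputable def pE (d : ℕ) (Θ : Matrix (Fin d × Fin d) (Fin d × Fin d) ℂ) (ε : ℝ) : ℝ :=
  sSup { x : ℝ | ∃ χ : Matrix (Fin d × Fin d) (Fin d × Fin d) ℂ,
    χ.PosSemidef ∧ ptrace1 χ = (1 / (d : ℂ)) • (1 : Matrix (Fin d) (Fin d) ℂ) ∧
    (star (maxEnt d) ⬝ᵥ χ.mulVec (maxEnt d)).re ≤ 1 - ε ∧ x = ((Θ * χ).trace).re }

/-- The rank-one projector `|ψ⟩⟨ψ|` of a vector `ψ`. -/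
noncomputable def proj {n : Type*} [Fintype n] (ψ : n → ℂ) : Matrix n n ℂ :=
  Matrix.vecMulVec ψ (star ψ)

/-! For `Θ = α |Φ⟩⟨Φ| + β 1` the constraint `tr₁ χ = 1/d` forces `tr χ = 1`, so the objective is
`tr (Θ χ) = α ⟨Φ|χ|Φ⟩ + β ≤ α (1 - ε) + β` when `α ≥ 0`. The bound is attained by the isotropic
state `(1 - t) |Φ⟩⟨Φ| + (t/d²) 1`, whose overlap with `Φ` is `1 - t (1 - 1/d²)`, so every
`0 ≤ ε ≤ 1 - 1/d²` is reached with `t ∈ [0, 1]`. The 2-design identity puts `Θ_P` in this form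
with `α = d/(d+1)` and `β = 1/(d+1)`. -/

open Matrix

section Proj

variable {n : Type*} [Fintype n]

lemma proj_mulVec (v x : n → ℂ) : proj v *ᵥ x = (star v ⬝ᵥ x) • v := by
  rw [proj, vecMulVec_mulVec, op_smul_eq_smul]

lemma trace_proj_mul (v : n → ℂ) (χ : Matrix n n ℂ) :
    (proj v * χ).trace = star v ⬝ᵥ χ *ᵥ v := by
  rw [proj, vecMulVec_mul, trace_vecMulVec, dotProduct_comm, ← dotProduct_mulVec]

end Proj

section PartialTrace

variable {d : ℕ}

lemma trace_eq_trace_ptrace1 (χ : Matrix (Fin d × Fin d) (Fin d × Fin d) ℂ) :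
    χ.trace = (ptrace1 χ).trace := by
  simp only [trace, diag, ptrace1, Fintype.sum_prod_type]
  exact Finset.sum_comm

lemma ptrace1_add (A B : Matrix (Fin d × Fin d) (Fin d × Fin d) ℂ) :
    ptrace1 (A + B) = ptrace1 A + ptrace1 B := by
  ext j l
  simp [ptrace1, Finset.sum_add_distrib]

lemma ptrace1_smul (c : ℂ) (A : Matrix (Fin d × Fin d) (Fin d × Fin d) ℂ) :
    ptrace1 (c • A) = c • ptrace1 A := by
  ext j l
  simp [ptrace1, Finset.mul_sum]

lemma ptrace1_one : ptrace1 (1 : Matrix (Fin d × Fin d) (Fin d × Fin d) ℂ) = (d : ℂ) • 1 := by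
  ext j l
  by_cases h : j = l <;> simp [ptrace1, one_apply, h]

lemma trace_eq_one_of_ptrace1 (hd : 0 < d) {χ : Matrix (Fin d × Fin d) (Fin d × Fin d) ℂ}
    (hχ : ptrace1 χ = (1 / (d : ℂ)) • 1) : χ.trace = 1 := by
  have : (d : ℂ) ≠ 0 := Nat.cast_ne_zero.mpr hd.ne'
  rw [trace_eq_trace_ptrace1, hχ, trace_smul, trace_one, Fintype.card_fin, smul_eq_mul]
  field_simp

end PartialTrace

section MaxEnt

variable {d : ℕ}

lemma star_maxEnt : star (maxEnt d) = maxEnt d := by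
  ext p
  by_cases hp : p.1 = p.2 <;> simp [maxEnt, hp, Complex.conj_ofReal]

lemma maxEnt_mul_maxEnt (p q : Fin d × Fin d) :
    maxEnt d p * maxEnt d q = if p.1 = p.2 ∧ q.1 = q.2 then (d : ℂ)⁻¹ else 0 := by
  have hsq : ((Real.sqrt d : ℂ))⁻¹ * ((Real.sqrt d : ℂ))⁻¹ = (d : ℂ)⁻¹ := by
    rw [← mul_inv, ← Complex.ofReal_mul, Real.mul_self_sqrt (Nat.cast_nonneg d)]
    simp
  by_cases hp : p.1 = p.2 <;> by_cases hq : q.1 = q.2 <;> simp [maxEnt, hp, hq, hsq]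

lemma star_maxEnt_dotProduct_maxEnt (hd : 0 < d) : star (maxEnt d) ⬝ᵥ maxEnt d = 1 := by
  rw [star_maxEnt]
  simp [dotProduct, maxEnt_mul_maxEnt, Fintype.sum_prod_type, hd.ne']

lemma ptrace1_proj_maxEnt : ptrace1 (proj (maxEnt d)) = (1 / (d : ℂ)) • 1 := by
  ext j l
  by_cases h : j = l
  · subst h
    simp [ptrace1, proj, vecMulVec_apply, star_maxEnt, maxEnt_mul_maxEnt]
  · simp only [ptrace1, proj, star_maxEnt, vecMulVec_apply, maxEnt_mul_maxEnt, Matrix.smul_apply,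
      one_apply_ne h, smul_eq_mul, mul_zero]
    exact Finset.sum_eq_zero fun a _ => if_neg fun ha => h (ha.1.symm.trans ha.2)

end MaxEnt

noncomputable def isotropicState (d : ℕ) (t : ℝ) : Matrix (Fin d × Fin d) (Fin d × Fin d) ℂ :=
  ((1 - t : ℝ) : ℂ) • proj (maxEnt d) + ((t / (d : ℝ) ^ 2 : ℝ) : ℂ) • 1

section Isotropic

variable {d : ℕ}

lemma posSemidef_isotropicState {t : ℝ} (ht₀ : 0 ≤ t) (ht₁ : t ≤ 1) :
    (isotropicState d t).PosSemidef := by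
  have h₁ : (0 : ℂ) ≤ ((1 - t : ℝ) : ℂ) := Complex.zero_le_real.mpr (by linarith)
  have h₂ : (0 : ℂ) ≤ ((t / (d : ℝ) ^ 2 : ℝ) : ℂ) := Complex.zero_le_real.mpr (by positivity)
  exact ((posSemidef_vecMulVec_self_star _).smul h₁).add (PosSemidef.one.smul h₂)

lemma ptrace1_isotropicState (hd : 0 < d) (t : ℝ) :
    ptrace1 (isotropicState d t) = (1 / (d : ℂ)) • 1 := by
  have : (d : ℂ) ≠ 0 := Nat.cast_ne_zero.mpr hd.ne'
  rw [isotropicState, ptrace1_add, ptrace1_smul, ptrace1_smul, ptrace1_proj_maxEnt, ptrace1_one,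
    smul_smul, smul_smul, ← add_smul]
  congr 1
  push_cast
  field_simp
  ring

lemma overlap_isotropicState (hd : 0 < d) (t : ℝ) :
    star (maxEnt d) ⬝ᵥ isotropicState d t *ᵥ maxEnt d =
      ((1 - t * (1 - 1 / (d : ℝ) ^ 2) : ℝ) : ℂ) := by
  rw [isotropicState, add_mulVec, smul_mulVec, smul_mulVec, one_mulVec, proj_mulVec,
    star_maxEnt_dotProduct_maxEnt hd, one_smul, dotProduct_add, dotProduct_smul, dotProduct_smul,
    star_maxEnt_dotProduct_maxEnt hd]
  push_cast
  simp only [smul_eq_mul, mul_one]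
  ring

end Isotropic

lemma exists_mem_Icc_mul_eq {ε c : ℝ} (hε : 0 ≤ ε) (hεc : ε ≤ c) :
    ∃ t ∈ Set.Icc (0 : ℝ) 1, t * c = ε := by
  rcases (hε.trans hεc).eq_or_lt with hc | hc
  · exact ⟨0, ⟨le_rfl, zero_le_one⟩, by linarith⟩
  · exact ⟨ε / c, ⟨div_nonneg hε hc.le, div_le_one_of_le₀ hεc hc.le⟩, div_mul_cancel₀ ε hc.ne'⟩

lemma re_trace_mul_of_ptrace1 {d : ℕ} (hd : 0 < d) (α β : ℝ)
    {χ : Matrix (Fin d × Fin d) (Fin d × Fin d) ℂ} (hχ : ptrace1 χ = (1 / (d : ℂ)) • 1) :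
    ((((α : ℂ) • proj (maxEnt d) + (β : ℂ) • 1) * χ).trace).re =
      α * (star (maxEnt d) ⬝ᵥ χ *ᵥ maxEnt d).re + β := by
  rw [add_mul, smul_mul, smul_mul, one_mul, trace_add, trace_smul, trace_smul, trace_proj_mul,
    trace_eq_one_of_ptrace1 hd hχ]
  simp

theorem pE_smul_proj_maxEnt_add_smul_one {d : ℕ} (hd : 0 < d) {α : ℝ} (hα : 0 ≤ α) (β : ℝ)
    {ε : ℝ} (hε₀ : 0 ≤ ε) (hε₁ : ε ≤ 1 - 1 / (d : ℝ) ^ 2) :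
    pE d ((α : ℂ) • proj (maxEnt d) + (β : ℂ) • 1) ε = α * (1 - ε) + β := by
  obtain ⟨t, ⟨ht₀, ht₁⟩, rfl⟩ := exists_mem_Icc_mul_eq hε₀ hε₁
  have hχ := ptrace1_isotropicState hd t
  refine IsGreatest.csSup_eq ⟨⟨isotropicState d t, posSemidef_isotropicState ht₀ ht₁, hχ, ?_, ?_⟩, ?_⟩
  · rw [overlap_isotropicState hd, Complex.ofReal_re]
  · rw [re_trace_mul_of_ptrace1 hd α β hχ, overlap_isotropicState hd, Complex.ofReal_re]
  · rintro x ⟨χ, -, hχ, hΦ, rfl⟩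
    rw [re_trace_mul_of_ptrace1 hd α β hχ]
    gcongr

theorem stmt_9_general (d : ℕ) (hd : 0 < d) {ι : Type} [Fintype ι]
    (p : ι → ℝ)
    (ψ : ι → Fin d → ℂ)
    (h2design : ∑ j, (p j : ℂ) • (proj (ψ j) ⊗ₖ (proj (ψ j)).map (starRingEnd ℂ)) =
      (1 / ((d : ℂ) * ((d : ℂ) + 1))) •
        ((d : ℂ) • proj (maxEnt d) + (1 : Matrix (Fin d × Fin d) (Fin d × Fin d) ℂ)))
    (ΘP : Matrix (Fin d × Fin d) (Fin d × Fin d) ℂ)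
    (hΘP : ΘP = (d : ℂ) • ∑ j, (p j : ℂ) •
      (proj (ψ j) ⊗ₖ (proj (ψ j)).map (starRingEnd ℂ))) :
    ΘP = (1 / ((d : ℂ) + 1)) •
        ((d : ℂ) • proj (maxEnt d) + (1 : Matrix (Fin d × Fin d) (Fin d × Fin d) ℂ)) ∧
      ∀ ε : ℝ, 0 ≤ ε → ε ≤ 1 - 1 / (d : ℝ) ^ 2 →
        pE d ΘP ε = 1 - (d : ℝ) * ε / ((d : ℝ) + 1) := by
  have hd₀ : (d : ℂ) ≠ 0 := Nat.cast_ne_zero.mpr hd.ne'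
  have hd₁ : (d : ℂ) + 1 ≠ 0 := by exact_mod_cast Nat.succ_ne_zero d
  have hΘ : ΘP = (1 / ((d : ℂ) + 1)) • ((d : ℂ) • proj (maxEnt d) + 1) := by
    rw [hΘP, h2design, smul_smul]
    congr 1
    field_simp
  refine ⟨hΘ, fun ε hε₀ hε₁ => ?_⟩
  have hΘ' : ΘP = ((d / (d + 1) : ℝ) : ℂ) • proj (maxEnt d) + ((1 / (d + 1) : ℝ) : ℂ) • 1 := by
    rw [hΘ, smul_add, smul_smul]
    push_cast
    ring_nf
  rw [hΘ', pE_smul_proj_maxEnt_add_smul_one hd (by positivity) _ hε₀ hε₁]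
  field_simp
  ring

/-- if the ensemble of pure test states `{ρ_j, p_j}` is a 2-design, i.e.,
`∑ⱼ p_j ρ_j ⊗ ρ_j* = (d|Φ⟩⟨Φ| + 1)/(d(d+1))`, then the preparation operator
`Θ_P = d ∑ⱼ p_j ρ_j ⊗ ρ_j*` equals `(d|Φ⟩⟨Φ| + 1)/(d+1)`, and for this `Θ_P`,
`p_E(Θ_P, ε) = 1 − dε/(d+1)` for all `0 ≤ ε ≤ 1 − 1/d²`. -/
theorem stmt_9 (d : ℕ) (hd : 0 < d) {ι : Type} [Fintype ι]
    (p : ι → ℝ) (hp : ∀ j, 0 ≤ p j) (hpsum : ∑ j, p j = 1)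
    (ψ : ι → Fin d → ℂ) (hψ : ∀ j, star (ψ j) ⬝ᵥ ψ j = 1)
    (h2design : ∑ j, (p j : ℂ) • (proj (ψ j) ⊗ₖ (proj (ψ j)).map (starRingEnd ℂ)) =
      (1 / ((d : ℂ) * ((d : ℂ) + 1))) •
        ((d : ℂ) • proj (maxEnt d) + (1 : Matrix (Fin d × Fin d) (Fin d × Fin d) ℂ)))
    (ΘP : Matrix (Fin d × Fin d) (Fin d × Fin d) ℂ)
    (hΘP : ΘP = (d : ℂ) • ∑ j, (p j : ℂ) •
      (proj (ψ j) ⊗ₖ (proj (ψ j)).map (starRingEnd ℂ))) :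
    ΘP = (1 / ((d : ℂ) + 1)) •
        ((d : ℂ) • proj (maxEnt d) + (1 : Matrix (Fin d × Fin d) (Fin d × Fin d) ℂ)) ∧
      ∀ ε : ℝ, 0 ≤ ε → ε ≤ 1 - 1 / (d : ℝ) ^ 2 →
        pE d ΘP ε = 1 - (d : ℝ) * ε / ((d : ℝ) + 1) :=
  stmt_9_general d hd p ψ h2design ΘP hΘP
end

section
/- For a balanced strategy, the spectral gap ν of Θ and the preparation and measurement spectral gaps satisfy ν ≥ ν_P ν_M, given that Θ ≤ ν_M Θ_P + β_M 1 where β_M = 1 − ν_M, and Θ_P − |Φ⟩⟨Φ| has norm β_P = 1 − ν_P. -/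
open scoped Matrix Kronecker ComplexOrder Matrix.Norms.L2Operator

/-!
Subtracting `p` from `θ ≤ t θ_P + (1 - t) 1` and dropping `-(1 - t) p ≤ 0` gives
`0 ≤ θ - p ≤ t (θ_P - p) + (1 - t) 1 ≤ (t ‖θ_P - p‖ + 1 - t) 1`, and for a positive element of a
C⋆-algebra the norm is the least such scalar bound. With `t = ν_M` this reads
`1 - ν ≤ ν_M (1 - ν_P) + 1 - ν_M`, i.e. `ν_P ν_M ≤ ν`.
-/

theorem CStarAlgebra.norm_sub_le_of_le_convex_comb_one {A : Type*} [CStarAlgebra A]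
    [PartialOrder A] [StarOrderedRing A] {p θP θ : A} {t : ℝ}
    (hp : 0 ≤ p) (hpθP : p ≤ θP) (hθPθ : θP ≤ θ) (ht0 : 0 ≤ t) (ht1 : t ≤ 1)
    (hup : θ ≤ t • θP + (1 - t) • 1) :
    ‖θ - p‖ ≤ t * ‖θP - p‖ + (1 - t) := by
  have hgap : IsSelfAdjoint (θP - p) := .of_nonneg (sub_nonneg.2 hpθP)
  rw [CStarAlgebra.norm_le_iff_le_algebraMap _
    (add_nonneg (mul_nonneg ht0 (norm_nonneg _)) (sub_nonneg.2 ht1))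
    (sub_nonneg.2 (hpθP.trans hθPθ))]
  calc θ - p ≤ t • θP + (1 - t) • 1 - p := sub_le_sub_right hup _
    _ = t • (θP - p) + (1 - t) • 1 - (1 - t) • p := by module
    _ ≤ t • (θP - p) + (1 - t) • 1 := sub_le_self _ (smul_nonneg (sub_nonneg.2 ht1) hp)
    _ ≤ t • algebraMap ℝ A ‖θP - p‖ + (1 - t) • 1 := by
      gcongr
      exact hgap.le_algebraMap_norm_self
    _ = algebraMap ℝ A (t * ‖θP - p‖ + (1 - t)) := by
      simp only [Algebra.algebraMap_eq_smul_one, add_smul, mul_smul]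

theorem stmt_15_general (d : ℕ)
    (Θ ΘP : Matrix (Fin d × Fin d) (Fin d × Fin d) ℂ)
    (h1 : (ΘP - proj (maxEnt d)).PosSemidef)
    (h2 : (Θ - ΘP).PosSemidef)
    (νM βM : ℝ) (hνM0 : 0 ≤ νM) (hνM1 : νM ≤ 1) (hβM : βM = 1 - νM)
    (hup : (((νM : ℂ) • ΘP + (βM : ℂ) • (1 : Matrix (Fin d × Fin d) (Fin d × Fin d) ℂ))
      - Θ).PosSemidef)
    (ν νP : ℝ)
    (hν : ν = 1 - ‖Θ - proj (maxEnt d)‖)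
    (hνP : νP = 1 - ‖ΘP - proj (maxEnt d)‖) :
    νP * νM ≤ ν := by
  subst hβM
  open scoped MatrixOrder in
  have hnorm : ‖Θ - proj (maxEnt d)‖ ≤ νM * ‖ΘP - proj (maxEnt d)‖ + (1 - νM) := by
    refine CStarAlgebra.norm_sub_le_of_le_convex_comb_one
      (Matrix.posSemidef_vecMulVec_self_star (maxEnt d)).nonneg h1 h2 hνM0 hνM1 ?_
    rw [Matrix.le_iff]
    simpa only [← Complex.coe_smul, Complex.ofReal_sub, Complex.ofReal_one] using hup
  rw [hν, hνP]
  linarith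

/-- for a balanced strategy with `|Φ⟩⟨Φ| ≤ Θ_P ≤ Θ ≤ 1`, spectral gaps
`ν = 1 − ‖Θ − |Φ⟩⟨Φ|‖`, `ν_P = 1 − ‖Θ_P − |Φ⟩⟨Φ|‖`, and measurement gap `ν_M ∈ [0,1]`
with `β_M = 1 − ν_M` such that `Θ ≤ ν_M Θ_P + β_M·1`, one has `ν ≥ ν_P ν_M`. -/
theorem stmt_15 (d : ℕ) (hd : 0 < d)
    (Θ ΘP : Matrix (Fin d × Fin d) (Fin d × Fin d) ℂ)
    (h1 : (ΘP - proj (maxEnt d)).PosSemidef)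
    (h2 : (Θ - ΘP).PosSemidef)
    (h3 : ((1 : Matrix (Fin d × Fin d) (Fin d × Fin d) ℂ) - Θ).PosSemidef)
    (νM βM : ℝ) (hνM0 : 0 ≤ νM) (hνM1 : νM ≤ 1) (hβM : βM = 1 - νM)
    (hup : (((νM : ℂ) • ΘP + (βM : ℂ) • (1 : Matrix (Fin d × Fin d) (Fin d × Fin d) ℂ))
      - Θ).PosSemidef)
    (ν νP : ℝ)
    (hν : ν = 1 - ‖Θ - proj (maxEnt d)‖)
    (hνP : νP = 1 - ‖ΘP - proj (maxEnt d)‖) :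
    νP * νM ≤ ν :=
  stmt_15_general d Θ ΘP h1 h2 νM βM hνM0 hνM1 hβM hup ν νP hν hνP
end
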